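/- arXiv:1309.4044 — 2 statements merged into one kernel-verified Lean document; each statement's English description precedes it below -/
import Mathlib

section
/- Let G be a finite set of nonzero polynomials in ℚ[x₁,...,xₙ] with a fixed monomial order. If the S-polynomial of every pair of elements of G reduces to 0 modulo G, then G is a Gröbner basis of the ideal it generates (Buchberger's criterion). -/
open MvPolynomial
open scoped MonomialOrder

namespace ModularGB

variable {σ : Type*}

/-- The leading exponent (multidegree) of `f` with respect to the monomial order `m`. -/
noncomputable def mdeg {R : Type*} [CommSemiring R] (m : MonomialOrder σ)
    (f : MvPolynomial σ R) : σ →₀ ℕ :=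
  m.toSyn.symm (f.support.sup fun d => m.toSyn d)

/-- The leading coefficient of `f`. -/
noncomputable def leadCoeff {R : Type*} [CommSemiring R] (m : MonomialOrder σ)
    (f : MvPolynomial σ R) : R :=
  f.coeff (mdeg m f)

/-- The leading term of `f`. -/
noncomputable def leadTerm {R : Type*} [CommSemiring R] (m : MonomialOrder σ)
    (f : MvPolynomial σ R) : MvPolynomial σ R :=
  monomial (mdeg m f) (leadCoeff m f)

/-- `f` reduces to zero upon division by the finite family `G`:
it has a standard representation `f = ∑ qᵢ Gᵢ` with `mdeg (qᵢ Gᵢ) ≼ mdeg f`. -/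
def RedZero {R : Type*} [CommSemiring R] (m : MonomialOrder σ) {ι : Type*} [Fintype ι]
    (G : ι → MvPolynomial σ R) (f : MvPolynomial σ R) : Prop :=
  ∃ q : ι → MvPolynomial σ R,
    f = ∑ i, q i * G i ∧ ∀ i, mdeg m (q i * G i) ≼[m] mdeg m f

/-- The S-polynomial of `f` and `g`. -/
noncomputable def sPoly (m : MonomialOrder σ) {K : Type*} [Field K]
    (f g : MvPolynomial σ K) : MvPolynomial σ K :=
  monomial (mdeg m f ⊔ mdeg m g - mdeg m f) (leadCoeff m f)⁻¹ * f
    - monomial (mdeg m f ⊔ mdeg m g - mdeg m g) (leadCoeff m g)⁻¹ * g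

/-- The leading-term ideal of an ideal `I`. -/
noncomputable def LTIdeal {R : Type*} [CommSemiring R] (m : MonomialOrder σ)
    (I : Ideal (MvPolynomial σ R)) : Ideal (MvPolynomial σ R) :=
  Ideal.span (leadTerm m '' {f | f ∈ I ∧ f ≠ 0})

/-- The family `G` is a Gröbner basis of `I`. -/
def IsGroebner {R : Type*} [CommSemiring R] (m : MonomialOrder σ) {ι : Type*}
    (G : ι → MvPolynomial σ R) (I : Ideal (MvPolynomial σ R)) : Prop :=
  (∀ i, G i ∈ I) ∧ Ideal.span (Set.range fun i => leadTerm m (G i)) = LTIdeal m I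

end ModularGB

/-!
Among all representations `f = ∑ qᵢ Gᵢ` of an element of the ideal, take one minimising
`δ = max deg (qᵢ Gᵢ)`; the monomial order is a well-order. If `deg f ≺ δ`, the top parts
`LT(qᵢ) Gᵢ` of degree `δ` cancel, so their sum is a combination of their pairwise S-polynomials,
each a monomial multiple of some `S(Gᵢ, Gⱼ)`. Substituting the standard representations of the
`S(Gᵢ, Gⱼ)`, whose degrees drop below `lcm(LM Gᵢ, LM Gⱼ)`, gives a representation of `f` with all
terms below `δ`, contradicting minimality. Hence `f` has a standard representation, and then
`LT f` is a sum of products `LT(qᵢ) LT(Gᵢ)`.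
-/

namespace ModularGB

open MonomialOrder

variable {σ : Type*} {m : MonomialOrder σ}

section CommSemiring

variable {R : Type*} [CommSemiring R]

theorem mdeg_eq_degree (f : MvPolynomial σ R) : mdeg m f = m.degree f := rfl

theorem leadCoeff_eq_leadingCoeff (f : MvPolynomial σ R) :
    leadCoeff m f = m.leadingCoeff f := rfl

theorem leadTerm_eq_leadingTerm (f : MvPolynomial σ R) :
    leadTerm m f = m.leadingTerm f := rfl

theorem toSyn_degree_lt_iff {f : MvPolynomial σ R} {δ : m.syn} (hδ : 0 < δ) :
    m.toSyn (m.degree f) < δ ↔ ∀ d ∈ f.support, m.toSyn d < δ := by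
  rw [degree, AddEquiv.apply_symm_apply, Finset.sup_lt_iff hδ]

variable {ι : Type*} [Fintype ι]

-- Bounded through supports rather than `degree`: since `degree 0 = 0`, a bound
-- `degree (qᵢ Gᵢ) ≺ δ` would exclude `0` for `δ = 0`, and this would not be a submodule.
variable (m) in
def repBelow (G : ι → MvPolynomial σ R) (δ : m.syn) : Submodule R (MvPolynomial σ R) where
  carrier := {f | ∃ q : ι → MvPolynomial σ R,
    f = ∑ i, q i * G i ∧ ∀ i, ∀ d ∈ (q i * G i).support, m.toSyn d < δ}
  add_mem' := by
    classical
    rintro _ _ ⟨q, rfl, hq⟩ ⟨q', rfl, hq'⟩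
    refine ⟨q + q', by simp only [Pi.add_apply, add_mul, Finset.sum_add_distrib],
      fun i d hd => ?_⟩
    rw [Pi.add_apply, add_mul] at hd
    rcases Finset.mem_union.mp (support_add hd) with h | h
    exacts [hq i d h, hq' i d h]
  zero_mem' := ⟨0, by simp, by simp⟩
  smul_mem' := by
    rintro c _ ⟨q, rfl, hq⟩
    refine ⟨c • q, by simp only [Pi.smul_apply, smul_mul_assoc, Finset.smul_sum],
      fun i d hd => hq i d ?_⟩
    rw [Pi.smul_apply, smul_mul_assoc] at hd
    exact support_smul hd

variable {G : ι → MvPolynomial σ R}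

theorem degree_lt_of_mem_repBelow {f : MvPolynomial σ R} {δ : m.syn}
    (hf : f ∈ repBelow m G δ) (hδ : 0 < δ) : m.toSyn (m.degree f) < δ := by
  classical
  obtain ⟨q, rfl, hq⟩ := hf
  refine (toSyn_degree_lt_iff hδ).mpr fun d hd => ?_
  obtain ⟨i, -, hi⟩ := Finset.mem_biUnion.mp (support_sum hd)
  exact hq i d hi

theorem monomial_mul_mem_repBelow {f : MvPolynomial σ R} {δ : m.syn}
    (hf : f ∈ repBelow m G δ) (e : σ →₀ ℕ) (c : R) :
    monomial e c * f ∈ repBelow m G (m.toSyn e + δ) := by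
  classical
  obtain ⟨q, rfl, hq⟩ := hf
  refine ⟨fun i => monomial e c * q i, by simp only [Finset.mul_sum, mul_assoc],
    fun i d hd => ?_⟩
  rw [mul_assoc] at hd
  obtain ⟨a, ha, b, hb, rfl⟩ := Finset.mem_add.mp (support_mul _ _ hd)
  rw [Finset.mem_singleton.mp (support_monomial_subset ha), map_add]
  exact (add_lt_add_iff_left _).mpr (hq i b hb)

theorem mem_repBelow_of_redZero {f : MvPolynomial σ R} {δ : m.syn} (hf : RedZero m G f)
    (hδ : m.toSyn (m.degree f) < δ) : f ∈ repBelow m G δ := by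
  obtain ⟨q, hfq, hq⟩ := hf
  exact ⟨q, hfq, fun i d hd => ((m.le_degree hd).trans (hq i)).trans_lt hδ⟩

theorem leadingTerm_mem_span_of_redZero [NoZeroDivisors R] {f : MvPolynomial σ R}
    (hf : RedZero m G f) :
    m.leadingTerm f ∈ Ideal.span (Set.range fun i => m.leadingTerm (G i)) := by
  obtain ⟨q, rfl, hq⟩ := hf
  simp only [mdeg_eq_degree] at hq
  rw [leadingTerm, leadingCoeff, coeff_sum, map_sum]
  refine Ideal.sum_mem _ fun i _ => ?_
  rcases (hq i).lt_or_eq with hlt | heq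
  · rw [coeff_eq_zero_of_lt hlt, monomial_zero]
    exact zero_mem _
  · rw [← m.toSyn.injective heq]
    change m.leadingTerm (q i * G i) ∈ _
    rw [leadingTerm_mul]
    exact Ideal.mul_mem_left _ _ (Ideal.subset_span ⟨i, rfl⟩)

end CommSemiring

theorem degree_sub_leadingTerm_mul_lt {R : Type*} [CommRing R] [NoZeroDivisors R]
    {p g : MvPolynomial σ R} (hp : p - m.leadingTerm p ≠ 0) (hg : g ≠ 0) :
    m.degree ((p - m.leadingTerm p) * g) ≺[m] m.degree (p * g) :=
  (m.degree_mul_lt_iff_left_lt_of_ne_zero hp hg).mpr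
    (m.degree_sub_leadingTerm_lt_degree (m.degree_ne_zero_of_sub_leadingTerm_ne_zero hp))

section Field

variable {K : Type*} [Field K]

theorem sPolynomial_eq_smul_sPoly {f g : MvPolynomial σ K} (hf : f ≠ 0) (hg : g ≠ 0) :
    m.sPolynomial f g = (m.leadingCoeff f * m.leadingCoeff g) • sPoly m f g := by
  have hf' := m.leadingCoeff_ne_zero_iff.mpr hf
  have hg' := m.leadingCoeff_ne_zero_iff.mpr hg
  simp only [sPolynomial_def, sPoly, mdeg_eq_degree, leadCoeff_eq_leadingCoeff, smul_sub,
    ← smul_mul_assoc, smul_monomial, smul_eq_mul]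
  congr 3 <;> field_simp

variable {ι : Type*} [Fintype ι] {G : ι → MvPolynomial σ K}

theorem sPolynomial_mem_repBelow (hG : ∀ i, G i ≠ 0)
    (hS : ∀ i j, RedZero m G (sPoly m (G i) (G j))) (i j : ι) :
    m.sPolynomial (G i) (G j) ∈ repBelow m G (m.toSyn (m.degree (G i) ⊔ m.degree (G j))) := by
  by_cases h0 : m.sPolynomial (G i) (G j) = 0
  · rw [h0]
    exact zero_mem _
  have hlt := m.degree_sPolynomial_lt_sup_degree h0
  have hc : IsRegular (m.leadingCoeff (G i) * m.leadingCoeff (G j)) :=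
    (mul_ne_zero (m.leadingCoeff_ne_zero_iff.mpr (hG i))
      (m.leadingCoeff_ne_zero_iff.mpr (hG j))).isUnit.isRegular
  rw [sPolynomial_eq_smul_sPoly (hG i) (hG j)] at hlt ⊢
  rw [degree_smul_of_isRegular hc] at hlt
  exact Submodule.smul_mem _ _ (mem_repBelow_of_redZero (hS i j) hlt)

theorem sPolynomial_leadingTerm_mul_mem_repBelow (hG : ∀ i, G i ≠ 0)
    (hS : ∀ i j, RedZero m G (sPoly m (G i) (G j))) {i j : ι} {p₁ p₂ : MvPolynomial σ K}
    {δ : m.syn} (h₁ : m.toSyn (m.degree (p₁ * G i)) = δ)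
    (h₂ : m.toSyn (m.degree (p₂ * G j)) = δ) :
    m.sPolynomial (m.leadingTerm p₁ * G i) (m.leadingTerm p₂ * G j) ∈ repBelow m G δ := by
  obtain ⟨δ, rfl⟩ := m.toSyn.surjective δ
  rw [EmbeddingLike.apply_eq_iff_eq] at h₁ h₂
  rcases eq_or_ne p₁ 0 with rfl | hp₁
  · simp
  rcases eq_or_ne p₂ 0 with rfl | hp₂
  · simp
  have hL : m.degree (G i) ⊔ m.degree (G j) ≤ δ :=
    sup_le (h₁ ▸ m.degree_mul hp₁ (hG i) ▸ le_add_self)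
      (h₂ ▸ m.degree_mul hp₂ (hG j) ▸ le_add_self)
  have := monomial_mul_mem_repBelow (sPolynomial_mem_repBelow hG hS i j)
    (δ - m.degree (G i) ⊔ m.degree (G j)) (m.leadingCoeff p₁ * m.leadingCoeff p₂)
  rw [m.sPolynomial_leadingTerm_mul', h₁, h₂, sup_idem]
  rwa [← map_add, tsub_add_cancel_of_le hL] at this

theorem mem_repBelow_of_degree_lt (hG : ∀ i, G i ≠ 0)
    (hS : ∀ i j, RedZero m G (sPoly m (G i) (G j))) {q : ι → MvPolynomial σ K} {δ : m.syn}
    (hq : ∀ i, m.toSyn (m.degree (q i * G i)) ≤ δ)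
    (hlt : m.toSyn (m.degree (∑ i, q i * G i)) < δ) :
    ∑ i, q i * G i ∈ repBelow m G δ := by
  classical
  have hδ : 0 < δ := (m.zero_le _).trans_lt hlt
  obtain ⟨a, ha⟩ : ∃ a : ι → MvPolynomial σ K, ∀ i,
      a i = if m.toSyn (m.degree (q i * G i)) = δ then m.leadingTerm (q i) else 0 :=
    ⟨_, fun _ => rfl⟩
  have hrest : ∑ i, (q i - a i) * G i ∈ repBelow m G δ := by
    refine ⟨_, rfl, fun i d hd => (m.le_degree hd).trans_lt ?_⟩
    have hne : (q i - a i) * G i ≠ 0 := by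
      rintro h
      simp [h] at hd
    rw [ha] at hne ⊢
    split_ifs at hne ⊢ with hi
    · exact hi ▸ degree_sub_leadingTerm_mul_lt (left_ne_zero_of_mul hne) (hG i)
    · rw [sub_zero]
      exact (hq i).lt_of_ne hi
  have hsplit : ∑ i, q i * G i = ∑ i, a i * G i + ∑ i, (q i - a i) * G i := by
    rw [← Finset.sum_add_distrib]
    simp only [sub_mul, add_sub_cancel]
  have htop : m.toSyn (m.degree (∑ i, a i * G i)) < δ := by
    rw [eq_sub_of_add_eq hsplit.symm]
    exact degree_sub_le.trans_lt (max_lt hlt (degree_lt_of_mem_repBelow hrest hδ))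
  have hdeg : ∀ i ∈ Finset.univ, m.toSyn (m.degree (a i * G i)) = δ ∨ a i * G i = 0 := by
    intro i _
    rw [ha]
    split_ifs with hi
    · exact Or.inl (by rw [degree_leadingTerm_mul, hi])
    · exact Or.inr (zero_mul _)
  obtain ⟨c, hc⟩ := m.sPolynomial_decomposition' (fun i => a i * G i) hdeg htop
  rw [hsplit, hc]
  refine add_mem (Submodule.sum_mem _ fun i _ => Submodule.sum_mem _ fun j _ =>
    Submodule.smul_mem _ _ ?_) hrest
  rw [ha, ha]
  split_ifs with hi hj hj
  · exact sPolynomial_leadingTerm_mul_mem_repBelow hG hS hi hj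
  all_goals simp

theorem redZero_of_mem_span (hG : ∀ i, G i ≠ 0)
    (hS : ∀ i j, RedZero m G (sPoly m (G i) (G j))) {f : MvPolynomial σ K}
    (hf : f ∈ Ideal.span (Set.range G)) : RedZero m G f := by
  obtain ⟨q, hq⟩ := Ideal.mem_span_range_iff_exists_fun.mp hf
  suffices key : ∀ (d : m.syn) (q : ι → MvPolynomial σ K), f = ∑ i, q i * G i →
      (∀ i, m.toSyn (m.degree (q i * G i)) ≤ d) → RedZero m G f from
    key _ q hq.symm fun i => Finset.le_sup (f := fun i => m.toSyn (m.degree (q i * G i)))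
      (Finset.mem_univ i)
  intro d
  induction d using WellFoundedLT.induction with
  | _ d ih =>
  intro q hfq hqd
  rcases le_or_gt d (m.toSyn (m.degree f)) with hfd | hfd
  · exact ⟨q, hfq, fun i => (hqd i).trans hfd⟩
  have hd : 0 < d := (m.zero_le _).trans_lt hfd
  obtain ⟨q', hfq', hq'⟩ : f ∈ repBelow m G d :=
    hfq ▸ mem_repBelow_of_degree_lt hG hS hqd (hfq ▸ hfd)
  refine ih _ ?_ q' hfq' fun i => Finset.le_sup (f := fun i => m.toSyn (m.degree (q' i * G i)))
    (Finset.mem_univ i)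
  exact (Finset.sup_lt_iff hd).mpr fun i _ => (toSyn_degree_lt_iff hd).mpr (hq' i)

end Field

end ModularGB

open ModularGB in
/-- Buchberger's criterion. -/
theorem stmt1 {σ : Type*} (m : MonomialOrder σ) {k : ℕ}
    (G : Fin k → MvPolynomial σ ℚ) (hG : ∀ i, G i ≠ 0)
    (hS : ∀ i j, RedZero m G (sPoly m (G i) (G j))) :
    IsGroebner m G (Ideal.span (Set.range G)) := by
  refine ⟨fun i => Ideal.subset_span ⟨i, rfl⟩, le_antisymm ?_ ?_⟩
  · rw [Ideal.span_le]
    rintro _ ⟨i, rfl⟩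
    exact Ideal.subset_span ⟨G i, ⟨Ideal.subset_span ⟨i, rfl⟩, hG i⟩, rfl⟩
  · rw [LTIdeal, Ideal.span_le]
    rintro _ ⟨f, ⟨hf, -⟩, rfl⟩
    simp only [leadTerm_eq_leadingTerm]
    exact leadingTerm_mem_span_of_redZero (redZero_of_mem_span hG hS hf)
end

section
/- Rational reconstruction uniqueness: Let m > 0 and let a/b, c/d be rational numbers in lowest terms with |a|, |c| ≤ N, 0 < b, d ≤ D, where 2·N·D < m, and suppose b and d are coprime to m. If a·b⁻¹ ≡ c·d⁻¹ (mod m), then a/b = c/d. -/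
open MvPolynomial
open scoped MonomialOrder

/-! Both fractions give the same residue, so `M ∣ a d - c b`; the bounds force `|a d - c b| ≤ 2ND < M`,
hence `a d = c b`. -/

theorem ZMod.intCast_mul_eq_mul_of_mul_inv_eq {n : ℕ} {a b c d : ℤ}
    (hb : IsCoprime b n) (hd : IsCoprime d n)
    (h : (a : ZMod n) * (b : ZMod n)⁻¹ = (c : ZMod n) * (d : ZMod n)⁻¹) :
    ((a * d : ℤ) : ZMod n) = ((c * b : ℤ) : ZMod n) := by
  push_cast
  calc (a : ZMod n) * d = a * (b : ZMod n)⁻¹ * b * d := by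
        rw [mul_assoc (a : ZMod n), ZMod.coe_int_inv_mul_eq_one hb, mul_one]
    _ = c * (d : ZMod n)⁻¹ * d * b := by rw [h]; ring
    _ = c * b := by rw [mul_assoc (c : ZMod n), ZMod.coe_int_inv_mul_eq_one hd, mul_one]

theorem Int.abs_mul_sub_mul_le {a b c d N D : ℤ} (haN : |a| ≤ N) (hcN : |c| ≤ N)
    (hbD : |b| ≤ D) (hdD : |d| ≤ D) : |a * d - c * b| ≤ 2 * N * D := by
  have hN : 0 ≤ N := (abs_nonneg a).trans haN
  calc |a * d - c * b| ≤ |a| * |d| + |c| * |b| := by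
        rw [← abs_mul, ← abs_mul]; exact abs_sub _ _
    _ ≤ N * D + N * D := by gcongr
    _ = 2 * N * D := by ring

theorem Int.mul_eq_mul_of_modEq_of_abs_le {M a b c d N D : ℤ} (h : a * d ≡ c * b [ZMOD M])
    (haN : |a| ≤ N) (hcN : |c| ≤ N) (hbD : |b| ≤ D) (hdD : |d| ≤ D) (hM : 2 * N * D < M) :
    a * d = c * b :=
  sub_eq_zero.mp <| Int.eq_zero_of_abs_lt_dvd h.symm.dvd <|
    (Int.abs_mul_sub_mul_le haN hcN hbD hdD).trans_lt hM

theorem stmt5_general (M : ℕ) (a b c d N D : ℤ)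
    (haN : |a| ≤ N) (hcN : |c| ≤ N)
    (hb : 0 < b) (hbD : b ≤ D) (hd : 0 < d) (hdD : d ≤ D)
    (hbound : 2 * N * D < (M : ℤ))
    (hbM : IsCoprime b (M : ℤ)) (hdM : IsCoprime d (M : ℤ))
    (hcong : (a : ZMod M) * (b : ZMod M)⁻¹ = (c : ZMod M) * (d : ZMod M)⁻¹) :
    (a : ℚ) / (b : ℚ) = (c : ℚ) / (d : ℚ) := by
  have hmod : a * d ≡ c * b [ZMOD M] :=
    (ZMod.intCast_eq_intCast_iff _ _ _).mp (ZMod.intCast_mul_eq_mul_of_mul_inv_eq hbM hdM hcong)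
  have hcross : a * d = c * b := Int.mul_eq_mul_of_modEq_of_abs_le hmod haN hcN
    (by rwa [abs_of_pos hb]) (by rwa [abs_of_pos hd]) hbound
  rw [div_eq_div_iff (by exact_mod_cast hb.ne') (by exact_mod_cast hd.ne')]
  exact_mod_cast hcross

/-- Uniqueness of rational (Farey) reconstruction modulo `M`. -/
theorem stmt5 (M : ℕ) (hM : 0 < M) (a b c d N D : ℤ)
    (hab : IsCoprime a b) (hcd : IsCoprime c d)
    (haN : |a| ≤ N) (hcN : |c| ≤ N)
    (hb : 0 < b) (hbD : b ≤ D) (hd : 0 < d) (hdD : d ≤ D)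
    (hbound : 2 * N * D < (M : ℤ))
    (hbM : IsCoprime b (M : ℤ)) (hdM : IsCoprime d (M : ℤ))
    (hcong : (a : ZMod M) * (b : ZMod M)⁻¹ = (c : ZMod M) * (d : ZMod M)⁻¹) :
    (a : ℚ) / (b : ℚ) = (c : ℚ) / (d : ℚ) :=
  stmt5_general M a b c d N D haN hcN hb hbD hd hdD hbound hbM hdM hcong
end
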